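/- arXiv:2402.01066 — 4 statements merged into one kernel-verified Lean document; each statement's English description precedes it below -/
import Mathlib

section
/- Let G be an Eulerian digraph in which every node has in-degree 2 and out-degree 2, let P be the 0/1-circulation polytope of G, let 0 ∈ P be the zero flow, and let x = 1 ∈ P be the full flow (both are vertices of P). Then the circuit distance from 0 to x equals 2 if and only if G decomposes into two simple Hamiltonian dicycles. -/
open Matrix

/-- `g` is a circuit of the polyhedron `{x : A x = b, B x ≤ d}` with respect to the
description `(A, B)`: a nonzero element of `ker A` with coprime integral components such that
`B g` is support-minimal among `{B x : x ∈ ker A, x ≠ 0}`. -/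
def IsCircuit {mA mB n : Type*} [Fintype n]
    (A : Matrix mA n ℝ) (B : Matrix mB n ℝ) (g : n → ℝ) : Prop :=
  A.mulVec g = 0 ∧ g ≠ 0 ∧
  (∃ z : n → ℤ, (∀ i, (z i : ℝ) = g i) ∧ Finset.univ.gcd z = 1) ∧
  ∀ x : n → ℝ, A.mulVec x = 0 → x ≠ 0 →
    ¬ (Function.support (B.mulVec x) ⊂ Function.support (B.mulVec g))

/-- Membership in the polyhedron `{x : A x = b, B x ≤ d}`. -/
def InPoly {mA mB n : Type*} [Fintype n] (A : Matrix mA n ℝ) (b : mA → ℝ)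
    (B : Matrix mB n ℝ) (d : mB → ℝ) (x : n → ℝ) : Prop :=
  A.mulVec x = b ∧ B.mulVec x ≤ d

/-- `((g 0, lam 0), …, (g (r-1), lam (r-1)))` is a (maximal) circuit walk from `x` to `y`
in the polyhedron `{x : A x = b, B x ≤ d}`. -/
def IsCircuitWalk {mA mB n : Type*} [Fintype n]
    (A : Matrix mA n ℝ) (b : mA → ℝ) (B : Matrix mB n ℝ) (d : mB → ℝ)
    (x y : n → ℝ) (r : ℕ) (g : Fin r → n → ℝ) (lam : Fin r → ℝ) : Prop :=
  (∀ i, IsCircuit A B (g i)) ∧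
  (∀ i, 0 < lam i) ∧
  (∀ k : Fin r, InPoly A b B d (x + ∑ i ∈ Finset.univ.filter (fun i => i ≤ k), lam i • g i)) ∧
  (x + ∑ i, lam i • g i = y) ∧
  (∀ k : Fin r, ∀ mu : ℝ, lam k < mu →
    ¬ InPoly A b B d ((x + ∑ i ∈ Finset.univ.filter (fun i => i < k), lam i • g i) + mu • g k))

/-- `u` and `u'` are sign-compatible with respect to `B`. -/
def SignCompat {mB n : Type*} [Fintype n] (B : Matrix mB n ℝ) (u u' : n → ℝ) : Prop :=
  ∀ i, 0 ≤ B.mulVec u i * B.mulVec u' i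

/-- Sign-compatible circuit decomposition of the vector `u` with respect to `(A, B)`. -/
def IsSCDecomp {mA mB n : Type*} [Fintype n]
    (A : Matrix mA n ℝ) (B : Matrix mB n ℝ) (u : n → ℝ)
    (r : ℕ) (g : Fin r → n → ℝ) (lam : Fin r → ℝ) : Prop :=
  (∀ i, IsCircuit A B (g i)) ∧ (∀ i, 0 < lam i) ∧ (∑ i, lam i • g i = u) ∧
  ∀ i j, SignCompat B (g i) (g j)

/-- A loopless digraph with node type `N` and arc type `α`. -/
structure Digraph' (N α : Type*) where
  src : α → N
  dst : α → N
  loopless : ∀ a, src a ≠ dst a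

/-- The node-arc incidence matrix of a digraph. -/
def incMat {N α : Type*} [DecidableEq N] (G : Digraph' N α) : Matrix N α ℝ :=
  Matrix.of fun v a => if G.src a = v then 1 else if G.dst a = v then -1 else 0

/-- The inequality system `x ≤ 1`-style box constraints: rows of the identity followed by
rows of the negative identity. -/
def boxB (α : Type*) [DecidableEq α] : Matrix (α ⊕ α) α ℝ :=
  Matrix.fromRows 1 (-1)

/-- Right-hand side for the box constraints `x ≤ 1`, `-x ≤ 0` of the 0/1-circulation polytope. -/
def boxd (α : Type*) : α ⊕ α → ℝ := Sum.elim (fun _ => 1) (fun _ => 0)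

/-- In-degree of a node. -/
def inDeg {N α : Type*} [Fintype α] [DecidableEq N] (G : Digraph' N α) (v : N) : ℕ :=
  (Finset.univ.filter fun a => G.dst a = v).card

/-- Out-degree of a node. -/
def outDeg {N α : Type*} [Fintype α] [DecidableEq N] (G : Digraph' N α) (v : N) : ℕ :=
  (Finset.univ.filter fun a => G.src a = v).card

/-- `S` is the arc set of a simple dicycle of `G` (a directed cycle with no repeated nodes). -/
def IsSimpleDicycle {N α : Type*} (G : Digraph' N α) (S : Set α) : Prop :=
  ∃ (k : ℕ) (e : Fin (k+1) → α) (v : Fin (k+1) → N),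
    Function.Injective e ∧ Function.Injective v ∧ S = Set.range e ∧
    ∀ i, G.src (e i) = v i ∧ G.dst (e i) = v (i + 1)

/-- `S` is the arc set of a simple Hamiltonian dicycle of `G`. -/
def IsHamiltonianDicycle {N α : Type*} (G : Digraph' N α) (S : Set α) : Prop :=
  ∃ (k : ℕ) (e : Fin (k+1) → α) (v : Fin (k+1) → N),
    Function.Injective e ∧ Function.Bijective v ∧ S = Set.range e ∧
    ∀ i, G.src (e i) = v i ∧ G.dst (e i) = v (i + 1)

/-- `G` decomposes into two simple Hamiltonian dicycles. -/
def DecompTwoHamiltonian {N α : Type*} (G : Digraph' N α) : Prop :=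
  ∃ S₁ S₂ : Set α, IsHamiltonianDicycle G S₁ ∧ IsHamiltonianDicycle G S₂ ∧
    Disjoint S₁ S₂ ∧ S₁ ∪ S₂ = Set.univ

/-! The circuits of the 0/1-circulation polytope with nonnegative entries are exactly the
indicator vectors of simple dicycles. In a circuit walk from `0` to `1` every step stays in the
box `[0, 1]`, so for a walk of length at most two all directions are nonnegative, hence
indicators of simple dicycles. A simple dicycle uses at most one of the two arcs leaving a node,
so one dicycle cannot cover all arcs, and two dicycles covering all arcs are disjoint and must
both pass through every node. Conversely, two complementary Hamiltonian dicycles give the walk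
`0 → 𝟙_{C} → 𝟙_{C} + 𝟙_{D} = 1`. -/

open Function Finset Matrix

lemma Nat.sInf_eq_iff_mem_of_forall_lt_notMem {S : Set ℕ} {n : ℕ} (hn : n ≠ 0)
    (h : ∀ m < n, m ∉ S) : sInf S = n ↔ n ∈ S := by
  refine ⟨fun hS => hS ▸ Nat.sInf_mem (Nat.nonempty_of_pos_sInf (by omega)), fun hnS => ?_⟩
  classical
  rw [Nat.sInf_def ⟨n, hnS⟩, Nat.find_eq_iff]
  exact ⟨hnS, h⟩

lemma eq_one_of_intCast_eq_indicator {α : Type*} [Fintype α] {S : Set α} {a : α} (ha : a ∈ S)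
    {c : ℝ} (hc : 0 < c) {z : α → ℤ} (hz : ∀ i, (z i : ℝ) = S.indicator (fun _ => c) i)
    (hgcd : univ.gcd z = 1) : c = 1 := by
  have hza : (z a : ℝ) = c := by rw [hz, Set.indicator_of_mem ha]
  have hdvd : ∀ i, z a ∣ z i := fun i => by
    by_cases hi : i ∈ S
    · rw [Int.cast_injective ((hz i).trans ((Set.indicator_of_mem hi _).trans hza.symm))]
    · rw [show z i = 0 by exact_mod_cast (hz i).trans (Set.indicator_of_notMem hi _)]
      exact dvd_zero _
  have hz1 : z a = 1 :=
    Int.eq_one_of_dvd_one (by exact_mod_cast hza ▸ hc.le) (hgcd ▸ dvd_gcd fun i _ => hdvd i)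
  rw [← hza, hz1, Int.cast_one]

lemma disjoint_and_union_eq_univ_of_smul_indicator_add {α : Type*} {S T : Set α} {a b : ℝ}
    (hS : S ≠ Set.univ) (hT : T ≠ Set.univ)
    (h : a • S.indicator 1 + b • T.indicator 1 = (1 : α → ℝ)) :
    Disjoint S T ∧ S ∪ T = Set.univ := by
  classical
  have hpt : ∀ i, (if i ∈ S then a else 0) + (if i ∈ T then b else 0) = 1 := fun i => by
    simpa [Set.indicator_apply] using congrFun h i
  obtain ⟨s, hs⟩ := (Set.ne_univ_iff_exists_notMem S).1 hS
  obtain ⟨t, ht⟩ := (Set.ne_univ_iff_exists_notMem T).1 hT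
  have hb : b = 1 := by
    have := hpt s
    by_cases hsT : s ∈ T <;> simp_all
  have ha : a = 1 := by
    have := hpt t
    by_cases htS : t ∈ S <;> simp_all
  subst ha hb
  refine ⟨Set.disjoint_left.2 fun i hiS hiT => ?_, Set.eq_univ_of_forall fun i => ?_⟩
  · have := hpt i
    norm_num [hiS, hiT] at this
  · by_contra hi
    rw [Set.mem_union, not_or] at hi
    simpa [hi.1, hi.2] using hpt i

section Polyhedron

variable {m α : Type*} [Fintype α] [DecidableEq α]

lemma boxB_mulVec (x : α → ℝ) : boxB α *ᵥ x = Sum.elim x (-x) := by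
  rw [boxB, fromRows_mulVec, one_mulVec, neg_mulVec, one_mulVec]

lemma support_boxB_mulVec (x : α → ℝ) :
    support (boxB α *ᵥ x) = Sum.elim id id ⁻¹' support x := by
  ext (a | a) <;> simp [boxB_mulVec]

lemma inPoly_boxB_iff {A : Matrix m α ℝ} {b : m → ℝ} {x : α → ℝ} :
    InPoly A b (boxB α) (boxd α) x ↔ A *ᵥ x = b ∧ 0 ≤ x ∧ x ≤ 1 := by
  simp only [InPoly, boxB_mulVec, Pi.le_def, Sum.forall, Sum.elim_inl, Sum.elim_inr, boxd,
    Pi.neg_apply, neg_nonpos, Pi.zero_apply, Pi.one_apply]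
  tauto

lemma isCircuit_boxB_iff {A : Matrix m α ℝ} {g : α → ℝ} :
    IsCircuit A (boxB α) g ↔ A *ᵥ g = 0 ∧ g ≠ 0 ∧
      (∃ z : α → ℤ, (∀ i, (z i : ℝ) = g i) ∧ Finset.univ.gcd z = 1) ∧
      ∀ x : α → ℝ, A *ᵥ x = 0 → x ≠ 0 → ¬ support x ⊂ support g := by
  have hsurj : Surjective (Sum.elim id id : α ⊕ α → α) := fun a => ⟨Sum.inl a, rfl⟩
  simp only [IsCircuit, support_boxB_mulVec, Set.ssubset_def,
    hsurj.preimage_subset_preimage_iff]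

end Polyhedron

section Walk

variable {mA mB n : Type*} [Fintype n] {A : Matrix mA n ℝ} {b : mA → ℝ} {B : Matrix mB n ℝ}
  {d : mB → ℝ} {x y : n → ℝ}

lemma IsCircuitWalk.eq_of_length_zero {g : Fin 0 → n → ℝ} {lam : Fin 0 → ℝ}
    (h : IsCircuitWalk A b B d x y 0 g lam) : x = y := by
  simpa using h.2.2.2.1

lemma isCircuitWalk_two_iff {g : Fin 2 → n → ℝ} {lam : Fin 2 → ℝ} :
    IsCircuitWalk A b B d x y 2 g lam ↔
      IsCircuit A B (g 0) ∧ IsCircuit A B (g 1) ∧ 0 < lam 0 ∧ 0 < lam 1 ∧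
      InPoly A b B d (x + lam 0 • g 0) ∧ InPoly A b B d (x + lam 0 • g 0 + lam 1 • g 1) ∧
      x + lam 0 • g 0 + lam 1 • g 1 = y ∧
      (∀ μ, lam 0 < μ → ¬ InPoly A b B d (x + μ • g 0)) ∧
      (∀ μ, lam 1 < μ → ¬ InPoly A b B d (x + lam 0 • g 0 + μ • g 1)) := by
  have h0 : univ.filter (fun i : Fin 2 => i ≤ 0) = {0} := by decide
  have h1 : univ.filter (fun i : Fin 2 => i ≤ 1) = univ := by decide
  have h0' : univ.filter (fun i : Fin 2 => i < 0) = ∅ := by decide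
  have h1' : univ.filter (fun i : Fin 2 => i < 1) = {0} := by decide
  simp only [IsCircuitWalk, Fin.forall_fin_two, h0, h1, h0', h1', sum_singleton, sum_empty,
    Fin.sum_univ_two, zero_add, add_assoc]
  tauto

end Walk

namespace Digraph'

variable {N α : Type*} (G : Digraph' N α)

/-- The data of `IsSimpleDicycle`, bundled; the cycle closes up because `i + 1` wraps around
in `Fin (k + 1)`. -/
structure SimpleCycle where
  k : ℕ
  arc : Fin (k + 1) → α
  node : Fin (k + 1) → N
  node_injective : Injective node
  src_arc : ∀ i, G.src (arc i) = node i
  dst_arc : ∀ i, G.dst (arc i) = node (i + 1)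

section Flow

variable [DecidableEq N] [Fintype α]

def outflow (x : α → ℝ) (w : N) : ℝ := ∑ a with G.src a = w, x a

def inflow (x : α → ℝ) (w : N) : ℝ := ∑ a with G.dst a = w, x a

variable {G}

lemma incMat_mulVec_apply (x : α → ℝ) (w : N) :
    (incMat G *ᵥ x) w = G.outflow x w - G.inflow x w := by
  simp only [mulVec, dotProduct, incMat, of_apply, outflow, inflow, sum_filter,
    ← sum_sub_distrib]
  refine sum_congr rfl fun a _ => ?_
  by_cases hs : G.src a = w
  · have hd : G.dst a ≠ w := fun hd => G.loopless a (hs.trans hd.symm)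
    simp [hs, hd]
  · by_cases hd : G.dst a = w <;> simp [hs, hd]

lemma incMat_mulVec_eq_zero_iff {x : α → ℝ} :
    incMat G *ᵥ x = 0 ↔ ∀ w, G.outflow x w = G.inflow x w := by
  simp only [funext_iff, incMat_mulVec_apply, Pi.zero_apply, sub_eq_zero]

lemma exists_src_eq_dst_of_circulation {x : α → ℝ} (hx : incMat G *ᵥ x = 0) (h0 : 0 ≤ x)
    {a : α} (ha : a ∈ support x) : ∃ b ∈ support x, G.src b = G.dst a := by
  have hin : x a ≤ G.inflow x (G.dst a) :=
    single_le_sum (fun b _ => h0 b) (by simp : a ∈ univ.filter fun b => G.dst b = G.dst a)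
  have hout : G.outflow x (G.dst a) ≠ 0 := by
    rw [incMat_mulVec_eq_zero_iff.1 hx]
    exact (lt_of_lt_of_le (lt_of_le_of_ne (h0 a) (Ne.symm ha)) hin).ne'
  obtain ⟨b, hb, hxb⟩ := exists_ne_zero_of_sum_ne_zero hout
  exact ⟨b, hxb, (mem_filter.1 hb).2⟩

end Flow

namespace SimpleCycle

variable {G} (C : G.SimpleCycle)

def arcs : Set α := Set.range C.arc

@[simp]
lemma arc_mem_arcs (i : Fin (C.k + 1)) : C.arc i ∈ C.arcs := ⟨i, rfl⟩

lemma support_indicator : support (C.arcs.indicator (1 : α → ℝ)) = C.arcs := by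
  simp

lemma indicator_ne_zero : C.arcs.indicator (1 : α → ℝ) ≠ 0 :=
  Function.ne_iff.2 ⟨C.arc 0, by simp⟩

lemma arc_injective : Injective C.arc := fun i j h =>
  C.node_injective (by rw [← C.src_arc, ← C.src_arc, h])

lemma eq_of_src_eq {a b : α} (ha : a ∈ C.arcs) (hb : b ∈ C.arcs) (h : G.src a = G.src b) :
    a = b := by
  obtain ⟨i, rfl⟩ := ha
  obtain ⟨j, rfl⟩ := hb
  rw [C.src_arc, C.src_arc] at h
  rw [C.node_injective h]

lemma eq_of_dst_eq {a b : α} (ha : a ∈ C.arcs) (hb : b ∈ C.arcs) (h : G.dst a = G.dst b) :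
    a = b := by
  obtain ⟨i, rfl⟩ := ha
  obtain ⟨j, rfl⟩ := hb
  rw [C.dst_arc, C.dst_arc] at h
  rw [add_right_cancel (C.node_injective h)]

section Flow

variable [DecidableEq N] [Fintype α] {x : α → ℝ}

lemma outflow_node (hx : support x ⊆ C.arcs) (i : Fin (C.k + 1)) :
    G.outflow x (C.node i) = x (C.arc i) := by
  refine sum_eq_single_of_mem _ (by simp [C.src_arc]) fun b hb hne => ?_
  by_contra hxb
  rw [← C.src_arc, mem_filter] at hb
  exact hne (C.eq_of_src_eq (hx hxb) (C.arc_mem_arcs i) hb.2)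

lemma inflow_node (hx : support x ⊆ C.arcs) (i : Fin (C.k + 1)) :
    G.inflow x (C.node (i + 1)) = x (C.arc i) := by
  refine sum_eq_single_of_mem _ (by simp [C.dst_arc]) fun b hb hne => ?_
  by_contra hxb
  rw [← C.dst_arc, mem_filter] at hb
  exact hne (C.eq_of_dst_eq (hx hxb) (C.arc_mem_arcs i) hb.2)

lemma outflow_eq_zero (hx : support x ⊆ C.arcs) {w : N} (hw : w ∉ Set.range C.node) :
    G.outflow x w = 0 := by
  refine sum_eq_zero fun b hb => not_not.1 fun hxb => hw ?_
  obtain ⟨i, rfl⟩ := hx hxb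
  exact ⟨i, (C.src_arc i).symm.trans (mem_filter.1 hb).2⟩

lemma inflow_eq_zero (hx : support x ⊆ C.arcs) {w : N} (hw : w ∉ Set.range C.node) :
    G.inflow x w = 0 := by
  refine sum_eq_zero fun b hb => not_not.1 fun hxb => hw ?_
  obtain ⟨i, rfl⟩ := hx hxb
  exact ⟨i + 1, (C.dst_arc i).symm.trans (mem_filter.1 hb).2⟩

lemma incMat_mulVec_indicator : incMat G *ᵥ C.arcs.indicator 1 = 0 := by
  have hsupp := C.support_indicator.subset
  refine incMat_mulVec_eq_zero_iff.2 fun w => ?_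
  by_cases hw : w ∈ Set.range C.node
  · obtain ⟨i, rfl⟩ := hw
    rw [C.outflow_node hsupp, ← sub_add_cancel i 1, C.inflow_node hsupp]
    simp
  · rw [C.outflow_eq_zero hsupp hw, C.inflow_eq_zero hsupp hw]

/-- Flow conservation at the nodes of `C` propagates the flow value around the cycle. -/
lemma apply_arc_eq_of_circulation (hx : incMat G *ᵥ x = 0) (hs : support x ⊆ C.arcs)
    (i : Fin (C.k + 1)) : x (C.arc i) = x (C.arc 0) := by
  have step : ∀ j, x (C.arc (j + 1)) = x (C.arc j) := fun j => by
    rw [← C.outflow_node hs, ← C.inflow_node hs]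
    exact incMat_mulVec_eq_zero_iff.1 hx _
  induction i using Fin.induction with
  | zero => rfl
  | succ i ih => rw [← Fin.coeSucc_eq_succ, step, ih]

lemma isCircuit_indicator [DecidableEq α] :
    IsCircuit (incMat G) (boxB α) (C.arcs.indicator 1) := by
  have harc := C.arc_mem_arcs 0
  rw [isCircuit_boxB_iff]
  refine ⟨C.incMat_mulVec_indicator, C.indicator_ne_zero, ⟨C.arcs.indicator 1, fun a => ?_, ?_⟩,
    fun x hx hx0 hss => ?_⟩
  · by_cases ha : a ∈ C.arcs <;> simp [ha]
  · have hu : IsUnit (univ.gcd (C.arcs.indicator (1 : α → ℤ))) :=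
      isUnit_of_dvd_one ((gcd_dvd (mem_univ (C.arc 0))).trans (by simp [harc]))
    rw [← Finset.normalize_gcd, normalize_eq_one.2 hu]
  · rw [C.support_indicator] at hss
    obtain ⟨a, hxa⟩ := Function.ne_iff.1 hx0
    obtain ⟨i, rfl⟩ := hss.1 hxa
    refine hss.2 ?_
    rintro _ ⟨j, rfl⟩
    rw [mem_support, C.apply_arc_eq_of_circulation hx hss.1 j,
      ← C.apply_arc_eq_of_circulation hx hss.1 i]
    exact hxa

end Flow

def ofChain (f : ℕ → α) (hf : ∀ n, G.src (f (n + 1)) = G.dst (f n)) (I k : ℕ)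
    (hclose : G.src (f (I + (k + 1))) = G.src (f I))
    (hinj : ∀ p q, p < q → q ≤ k → G.src (f (I + p)) ≠ G.src (f (I + q))) : G.SimpleCycle where
  k := k
  arc i := f (I + i)
  node i := G.src (f (I + i))
  node_injective i j h := by
    by_contra hij
    rcases lt_or_gt_of_ne (Fin.val_injective.ne hij) with hlt | hlt
    · exact hinj _ _ hlt (Nat.lt_succ_iff.1 j.2) h
    · exact hinj _ _ hlt (Nat.lt_succ_iff.1 i.2) h.symm
  src_arc _ := rfl
  dst_arc i := by
    rw [← hf, Fin.val_add_one]
    split_ifs with hi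
    · rw [hi, Fin.val_last, add_zero, add_assoc, hclose]
    · rw [add_assoc]

lemma exists_subset_range_of_chain [Finite α] (f : ℕ → α)
    (hf : ∀ n, G.src (f (n + 1)) = G.dst (f n)) : ∃ C : G.SimpleCycle, C.arcs ⊆ Set.range f := by
  classical
  have hrep : ∃ q, ∃ p < q, G.src (f p) = G.src (f q) := by
    obtain ⟨p, q, hpq, h⟩ := Finite.exists_ne_map_eq_of_infinite f
    rcases lt_or_gt_of_ne hpq with hlt | hlt
    · exact ⟨q, p, hlt, congrArg G.src h⟩
    · exact ⟨p, q, hlt, congrArg G.src h.symm⟩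
  -- cut the walk at the first return to an earlier source node
  obtain ⟨I, hIJ, hI⟩ := Nat.find_spec hrep
  refine ⟨ofChain f hf I (Nat.find hrep - I - 1) ?_ ?_, ?_⟩
  · rw [show I + (Nat.find hrep - I - 1 + 1) = Nat.find hrep by omega]
    exact hI.symm
  · intro p q hpq hq h
    exact Nat.find_min hrep (by omega : I + q < Nat.find hrep) ⟨I + p, by omega, h⟩
  · rintro _ ⟨i, rfl⟩
    exact ⟨_, rfl⟩

end SimpleCycle

section Circuit

variable {G} [DecidableEq N] [Fintype α] {x : α → ℝ}

lemma exists_simpleCycle_subset_support (hx : incMat G *ᵥ x = 0) (h0 : 0 ≤ x) (hne : x ≠ 0) :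
    ∃ C : G.SimpleCycle, C.arcs ⊆ support x := by
  obtain ⟨a, ha⟩ := Function.ne_iff.1 hne
  choose! next hnext hsrc using fun b (hb : b ∈ support x) =>
    exists_src_eq_dst_of_circulation hx h0 hb
  have hmem : ∀ n, next^[n] a ∈ support x := fun n => by
    induction n with
    | zero => exact ha
    | succ n ih => rw [iterate_succ_apply']; exact hnext _ ih
  obtain ⟨C, hC⟩ := SimpleCycle.exists_subset_range_of_chain (fun n => next^[n] a) fun n => by
    simp only [iterate_succ_apply']
    exact hsrc _ (hmem n)
  exact ⟨C, hC.trans (Set.range_subset_iff.2 hmem)⟩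

lemma exists_eq_indicator_of_isCircuit [DecidableEq α] (hg : IsCircuit (incMat G) (boxB α) x)
    (h0 : 0 ≤ x) : ∃ C : G.SimpleCycle, x = C.arcs.indicator 1 := by
  rw [isCircuit_boxB_iff] at hg
  obtain ⟨hker, hne, ⟨z, hz, hgcd⟩, hmin⟩ := hg
  obtain ⟨C, hC⟩ := exists_simpleCycle_subset_support hker h0 hne
  have hsupp : support x = C.arcs := by
    refine (hC.antisymm ?_).symm
    by_contra h
    refine hmin _ C.incMat_mulVec_indicator C.indicator_ne_zero ?_
    rw [C.support_indicator]
    exact ⟨hC, h⟩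
  have hx : x = C.arcs.indicator (fun _ => x (C.arc 0)) := funext fun a => by
    by_cases ha : a ∈ C.arcs
    · obtain ⟨i, rfl⟩ := ha
      rw [Set.indicator_of_mem (C.arc_mem_arcs i), C.apply_arc_eq_of_circulation hker hsupp.le i]
    · rw [Set.indicator_of_notMem ha]
      exact notMem_support.1 (hsupp ▸ ha)
  have harc := C.arc_mem_arcs 0
  have hpos : 0 < x (C.arc 0) := (h0 _).lt_of_ne (Ne.symm (hsupp ▸ harc : C.arc 0 ∈ support x))
  have hc : x (C.arc 0) = 1 :=
    eq_one_of_intCast_eq_indicator harc hpos (fun i => (hz i).trans (congrFun hx i)) hgcd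
  exact ⟨C, hx.trans (by rw [hc]; rfl)⟩

end Circuit

variable {G}

lemma exists_ne_src_eq_of_one_lt_outDeg [Fintype α] [DecidableEq N] {w : N}
    (h : 1 < outDeg G w) : ∃ a b, a ≠ b ∧ G.src a = w ∧ G.src b = w := by
  obtain ⟨a, ha, b, hb, hab⟩ := one_lt_card.1 h
  exact ⟨a, b, hab, (mem_filter.1 ha).2, (mem_filter.1 hb).2⟩

namespace SimpleCycle

variable (C : G.SimpleCycle)

lemma isHamiltonianDicycle (h : Surjective C.node) : IsHamiltonianDicycle G C.arcs :=
  ⟨C.k, C.arc, C.node, C.arc_injective, ⟨C.node_injective, h⟩, rfl,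
    fun i => ⟨C.src_arc i, C.dst_arc i⟩⟩

variable [Fintype α] [DecidableEq N]

lemma arcs_ne_univ [Nonempty N] (hout : ∀ w, 1 < outDeg G w) : C.arcs ≠ Set.univ := by
  intro h
  obtain ⟨a, b, hab, ha, hb⟩ := exists_ne_src_eq_of_one_lt_outDeg (hout (Classical.arbitrary N))
  rw [Set.eq_univ_iff_forall] at h
  exact hab (C.eq_of_src_eq (h a) (h b) (ha.trans hb.symm))

lemma node_surjective_of_union_eq_univ (hout : ∀ w, 1 < outDeg G w) (D : G.SimpleCycle)
    (h : C.arcs ∪ D.arcs = Set.univ) : Surjective C.node := by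
  intro w
  obtain ⟨a, b, hab, ha, hb⟩ := exists_ne_src_eq_of_one_lt_outDeg (hout w)
  rw [Set.eq_univ_iff_forall] at h
  -- `D` leaves `w` at most once
  have : a ∈ C.arcs ∨ b ∈ C.arcs := by
    by_contra! hn
    exact hab (D.eq_of_src_eq ((h a).resolve_left hn.1) ((h b).resolve_left hn.2)
      (ha.trans hb.symm))
  rcases this with ⟨i, rfl⟩ | ⟨i, rfl⟩
  · exact ⟨i, (C.src_arc i).symm.trans ha⟩
  · exact ⟨i, (C.src_arc i).symm.trans hb⟩

end SimpleCycle

lemma _root_.IsHamiltonianDicycle.exists_simpleCycle {S : Set α}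
    (h : IsHamiltonianDicycle G S) : ∃ C : G.SimpleCycle, C.arcs = S := by
  obtain ⟨k, e, v, -, hv, rfl, hev⟩ := h
  exact ⟨⟨k, e, v, hv.injective, fun i => (hev i).1, fun i => (hev i).2⟩, rfl⟩

section CirculationPolytope

variable [Fintype α] [DecidableEq N] [DecidableEq α]

lemma not_isCircuitWalk_zero_one_of_length_zero [Nonempty N] (hout : ∀ w, 1 < outDeg G w)
    {g : Fin 0 → α → ℝ} {lam : Fin 0 → ℝ} :
    ¬ IsCircuitWalk (incMat G) 0 (boxB α) (boxd α) 0 1 0 g lam := fun hW => by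
  obtain ⟨a, -⟩ := exists_ne_src_eq_of_one_lt_outDeg (hout (Classical.arbitrary N))
  simpa using congrFun hW.eq_of_length_zero a

lemma not_isCircuitWalk_zero_one_of_length_one [Nonempty N] (hout : ∀ w, 1 < outDeg G w)
    {g : Fin 1 → α → ℝ} {lam : Fin 1 → ℝ} :
    ¬ IsCircuitWalk (incMat G) 0 (boxB α) (boxd α) 0 1 1 g lam := by
  rintro ⟨hcirc, hpos, -, hend, -⟩
  rw [Fin.sum_univ_one, zero_add] at hend
  obtain ⟨C, hC⟩ := exists_eq_indicator_of_isCircuit (hcirc 0)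
    ((smul_nonneg_iff_nonneg_of_pos_left (hpos 0)).1 (hend ▸ zero_le_one))
  obtain ⟨a, ha⟩ := (Set.ne_univ_iff_exists_notMem _).1 (C.arcs_ne_univ hout)
  simpa [hC, ha] using congrFun hend a

lemma decompTwoHamiltonian_of_isCircuitWalk [Nonempty N] (hout : ∀ w, 1 < outDeg G w)
    {g : Fin 2 → α → ℝ} {lam : Fin 2 → ℝ}
    (hW : IsCircuitWalk (incMat G) 0 (boxB α) (boxd α) 0 1 2 g lam) :
    DecompTwoHamiltonian G := by
  obtain ⟨hg₀, hg₁, hlam₀, hlam₁, hP, -, hend, -⟩ := isCircuitWalk_two_iff.1 hW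
  obtain ⟨-, hlo, hhi⟩ := inPoly_boxB_iff.1 hP
  rw [zero_add] at hlo hhi hend
  have h₀ : 0 ≤ g 0 := (smul_nonneg_iff_nonneg_of_pos_left hlam₀).1 hlo
  have h₁ : 0 ≤ g 1 := (smul_nonneg_iff_nonneg_of_pos_left hlam₁).1
    (le_add_iff_nonneg_right (lam 0 • g 0) |>.1 (hend ▸ hhi))
  obtain ⟨C, hC⟩ := exists_eq_indicator_of_isCircuit hg₀ h₀
  obtain ⟨D, hD⟩ := exists_eq_indicator_of_isCircuit hg₁ h₁
  rw [hC, hD] at hend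
  obtain ⟨hdisj, hunion⟩ := disjoint_and_union_eq_univ_of_smul_indicator_add
    (C.arcs_ne_univ hout) (D.arcs_ne_univ hout) hend
  exact ⟨C.arcs, D.arcs,
    C.isHamiltonianDicycle (C.node_surjective_of_union_eq_univ hout D hunion),
    D.isHamiltonianDicycle
      (D.node_surjective_of_union_eq_univ hout C (Set.union_comm C.arcs D.arcs ▸ hunion)),
    hdisj, hunion⟩

lemma isCircuitWalk_indicator_indicator (C D : G.SimpleCycle) (hdisj : Disjoint C.arcs D.arcs)
    (hunion : C.arcs ∪ D.arcs = Set.univ) :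
    IsCircuitWalk (incMat G) 0 (boxB α) (boxd α) 0 1 2
      ![C.arcs.indicator 1, D.arcs.indicator 1] 1 := by
  have hsum : C.arcs.indicator 1 + D.arcs.indicator 1 = (1 : α → ℝ) := by
    rw [Pi.add_def, ← Set.indicator_union_of_disjoint hdisj, hunion, Set.indicator_univ]
  have hD₀ : D.arc 0 ∉ C.arcs := Set.disjoint_right.1 hdisj (D.arc_mem_arcs 0)
  refine isCircuitWalk_two_iff.2 ⟨C.isCircuit_indicator, D.isCircuit_indicator, one_pos, one_pos,
    ?_, ?_, ?_, ?_, ?_⟩ <;>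
    simp only [Matrix.cons_val_zero, Matrix.cons_val_one, Pi.one_apply, one_smul, zero_add, hsum]
  · exact inPoly_boxB_iff.2 ⟨C.incMat_mulVec_indicator, Set.indicator_nonneg (by simp),
      Set.indicator_le_self' (by simp)⟩
  · exact inPoly_boxB_iff.2 ⟨by rw [← hsum, mulVec_add, C.incMat_mulVec_indicator,
      D.incMat_mulVec_indicator, add_zero], zero_le_one, le_rfl⟩
  · intro μ hμ hP
    have hle : μ ≤ 1 := by simpa using (inPoly_boxB_iff.1 hP).2.2 (C.arc 0)
    linarith
  · intro μ hμ hP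
    have hle : μ ≤ 1 := by simpa [hD₀] using (inPoly_boxB_iff.1 hP).2.2 (D.arc 0)
    linarith

end CirculationPolytope

end Digraph'

open Digraph'

theorem circuit_distance_two_iff_two_hamiltonian_dicycles_general
    {N α : Type*} [Fintype α] [DecidableEq N] [DecidableEq α] [Nonempty N]
    (G : Digraph' N α)
    (hdeg : ∀ v : N, inDeg G v = 2 ∧ outDeg G v = 2) :
    sInf {r : ℕ | ∃ (g : Fin r → α → ℝ) (lam : Fin r → ℝ),
        IsCircuitWalk (incMat G) 0 (boxB α) (boxd α) (0 : α → ℝ) (1 : α → ℝ) r g lam} = 2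
      ↔ DecompTwoHamiltonian G := by
  have hout : ∀ w, 1 < outDeg G w := fun w => by rw [(hdeg w).2]; norm_num
  rw [Nat.sInf_eq_iff_mem_of_forall_lt_notMem two_ne_zero]
  · constructor
    · rintro ⟨g, lam, hW⟩
      exact decompTwoHamiltonian_of_isCircuitWalk hout hW
    · rintro ⟨S, T, hS, hT, hdisj, hunion⟩
      obtain ⟨C, rfl⟩ := hS.exists_simpleCycle
      obtain ⟨D, rfl⟩ := hT.exists_simpleCycle
      exact ⟨_, _, isCircuitWalk_indicator_indicator C D hdisj hunion⟩
  · rintro m hm ⟨g, lam, hW⟩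
    interval_cases m
    · exact not_isCircuitWalk_zero_one_of_length_zero hout hW
    · exact not_isCircuitWalk_zero_one_of_length_one hout hW

/-- For an Eulerian digraph `G` in which every node has in-degree `2` and
out-degree `2`, with `P` the 0/1-circulation polytope of `G`, the circuit distance from the
zero flow `0` to the full flow `1` equals `2` if and only if `G` decomposes into two simple
Hamiltonian dicycles. -/
theorem circuit_distance_two_iff_two_hamiltonian_dicycles
    {N α : Type*} [Fintype N] [Fintype α] [DecidableEq N] [DecidableEq α] [Nonempty N]
    (G : Digraph' N α)
    (hdeg : ∀ v : N, inDeg G v = 2 ∧ outDeg G v = 2) :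
    sInf {r : ℕ | ∃ (g : Fin r → α → ℝ) (lam : Fin r → ℝ),
        IsCircuitWalk (incMat G) 0 (boxB α) (boxd α) (0 : α → ℝ) (1 : α → ℝ) r g lam} = 2
      ↔ DecompTwoHamiltonian G :=
  circuit_distance_two_iff_two_hamiltonian_dicycles_general G hdeg
end

section
/- Let p ∈ (1,∞), let n ≥ 2 be a real number, let r ≥ 1 be an integer, and let z_1, …, z_r be real numbers with 2 ≤ z_i ≤ n for every i, Σ_{i=1}^r z_i ≥ 2n, and z_j < n for at least one index j. Then z_1^{1/p} + ⋯ + z_r^{1/p} > 2·n^{1/p}. -/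
/-! Since `a = 1/p < 1`, the function `z ↦ z ^ (a - 1)` is decreasing, so `z ^ a = z * z ^ (a - 1)`
is at least `z * n ^ (a - 1)` for `0 < z ≤ n`, strictly when `z < n`. Summing, `∑ zᵢ ^ a` exceeds
`(∑ zᵢ) * n ^ (a - 1) ≥ 2n * n ^ (a - 1) = 2 n ^ a`. -/

namespace Real

lemma mul_rpow_sub_one_le_rpow {x y a : ℝ} (hx : 0 < x) (hxy : x ≤ y) (ha : a ≤ 1) :
    x * y ^ (a - 1) ≤ x ^ a := by
  calc x * y ^ (a - 1) ≤ x * x ^ (a - 1) :=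
        mul_le_mul_of_nonneg_left (rpow_le_rpow_of_nonpos hx hxy (by linarith)) hx.le
    _ = x ^ a := by rw [rpow_sub_one hx.ne', mul_div_cancel₀ _ hx.ne']

lemma mul_rpow_sub_one_lt_rpow {x y a : ℝ} (hx : 0 < x) (hxy : x < y) (ha : a < 1) :
    x * y ^ (a - 1) < x ^ a := by
  calc x * y ^ (a - 1) < x * x ^ (a - 1) :=
        mul_lt_mul_of_pos_left (rpow_lt_rpow_of_neg hx hxy (by linarith)) hx
    _ = x ^ a := by rw [rpow_sub_one hx.ne', mul_div_cancel₀ _ hx.ne']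

lemma sum_mul_rpow_sub_one_lt_sum_rpow {ι : Type*} {s : Finset ι} {z : ι → ℝ} {y a : ℝ}
    (hz : ∀ i ∈ s, 0 < z i) (hzy : ∀ i ∈ s, z i ≤ y) (hj : ∃ j ∈ s, z j < y) (ha : a < 1) :
    (∑ i ∈ s, z i) * y ^ (a - 1) < ∑ i ∈ s, z i ^ a := by
  obtain ⟨j, hjs, hjy⟩ := hj
  rw [Finset.sum_mul]
  exact Finset.sum_lt_sum (fun i hi => mul_rpow_sub_one_le_rpow (hz i hi) (hzy i hi) ha.le)
    ⟨j, hjs, mul_rpow_sub_one_lt_rpow (hz j hjs) hjy ha⟩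

end Real

theorem sum_rpow_gt_of_not_two_hamiltonian_general
    (p : ℝ) (hp : 1 < p) (n : ℝ) (r : ℕ)
    (z : Fin r → ℝ) (hz2 : ∀ i, 2 ≤ z i) (hzn : ∀ i, z i ≤ n)
    (hsum : 2 * n ≤ ∑ i, z i) (hj : ∃ j, z j < n) :
    2 * n ^ (1 / p) < ∑ i, z i ^ (1 / p) := by
  have hzpos : ∀ i, 0 < z i := fun i => by linarith [hz2 i]
  have hn0 : 0 < n := by obtain ⟨j, hj⟩ := hj; linarith [hzpos j]
  have hα : 1 / p < 1 := (div_lt_one (by linarith)).2 hp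
  calc 2 * n ^ (1 / p) = 2 * n * n ^ (1 / p - 1) := by
        rw [Real.rpow_sub_one hn0.ne']; field_simp
    _ ≤ (∑ i, z i) * n ^ (1 / p - 1) := by gcongr
    _ < ∑ i, z i ^ (1 / p) :=
        Real.sum_mul_rpow_sub_one_lt_sum_rpow (fun i _ => hzpos i) (fun i _ => hzn i)
          (by simpa using hj) hα

/-- Let `1 < p`, let `n ≥ 2` be a real number, `r ≥ 1` an integer, and let
`z₁, …, z_r` be reals with `2 ≤ zᵢ ≤ n` for all `i`, `∑ zᵢ ≥ 2n`, and `z_j < n` for at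
least one `j`.  Then `z₁^{1/p} + ⋯ + z_r^{1/p} > 2 n^{1/p}`. -/
theorem sum_rpow_gt_of_not_two_hamiltonian
    (p : ℝ) (hp : 1 < p) (n : ℝ) (hn : 2 ≤ n) (r : ℕ) (hr : 1 ≤ r)
    (z : Fin r → ℝ) (hz2 : ∀ i, 2 ≤ z i) (hzn : ∀ i, z i ≤ n)
    (hsum : 2 * n ≤ ∑ i, z i) (hj : ∃ j, z j < n) :
    2 * n ^ (1 / p) < ∑ i, z i ^ (1 / p) :=
  sum_rpow_gt_of_not_two_hamiltonian_general p hp n r z hz2 hzn hsum hj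
end

section
/- Let P = {x ∈ ℝ^n : Bx ≤ d} be a rational polytope, c ∈ ℝ^n, and ω_0 = min{c^T x : x ∈ P}. Let ε > 0 and assume: (i) every vertex w of P with c^T w > ω_0 satisfies c^T w > ω_0 + ε; (ii) P has the vertex-walk property, i.e., for every vertex u of P and every circuit g of P feasible at u, maxstep(u,g;P) is a vertex of P; (iii) the facet F = {x ∈ P_ε : c^T x = ω_0 + ε} of P_ε := P ∩ {x : c^T x ≥ ω_0 + ε} contains no vertex of P. Let v be a vertex of P with c^T v > ω_0 + ε (so v is a vertex of P_ε). If g is a circuit of P_ε (with respect to the description of P with the added row −c^T x ≤ −(ω_0 + ε)) such that maxstep(v,g;P_ε) ∈ F, then g is a circuit of P and maxstep(v,g;P) lies in the optimal face {x ∈ P : c^T x = ω_0}. -/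
open Matrix

/-- The polyhedron `{x : B x ≤ d}`. -/
def PolyIneq {mB n : Type*} [Fintype n] (B : Matrix mB n ℝ) (d : mB → ℝ) : Set (n → ℝ) :=
  {x | B.mulVec x ≤ d}

/-- `g` is a circuit of the polyhedron `{x : B x ≤ d}` with respect to the description `B`
(no equality constraints): a nonzero vector with coprime integral components such that `B g`
is support-minimal among `{B x : x ≠ 0}`. -/
def IsCircuitI {mB n : Type*} [Fintype n] (B : Matrix mB n ℝ) (g : n → ℝ) : Prop :=
  g ≠ 0 ∧
  (∃ z : n → ℤ, (∀ i, (z i : ℝ) = g i) ∧ Finset.univ.gcd z = 1) ∧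
  ∀ x : n → ℝ, x ≠ 0 →
    ¬ (Function.support (B.mulVec x) ⊂ Function.support (B.mulVec g))

/-- A (maximal) circuit walk from `x` to `y` in the polyhedron `{x : B x ≤ d}`. -/
def IsCircuitWalkI {mB n : Type*} [Fintype n] (B : Matrix mB n ℝ) (d : mB → ℝ)
    (x y : n → ℝ) (r : ℕ) (g : Fin r → n → ℝ) (lam : Fin r → ℝ) : Prop :=
  (∀ i, IsCircuitI B (g i)) ∧
  (∀ i, 0 < lam i) ∧
  (∀ k : Fin r, (x + ∑ i ∈ Finset.univ.filter (fun i => i ≤ k), lam i • g i) ∈ PolyIneq B d) ∧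
  (x + ∑ i, lam i • g i = y) ∧
  (∀ k : Fin r, ∀ mu : ℝ, lam k < mu →
    ((x + ∑ i ∈ Finset.univ.filter (fun i => i < k), lam i • g i) + mu • g k) ∉ PolyIneq B d)

/-- Sign-compatible circuit decomposition of the vector `u` with respect to `B`. -/
def IsSCDecompI {mB n : Type*} [Fintype n] (B : Matrix mB n ℝ) (u : n → ℝ)
    (r : ℕ) (g : Fin r → n → ℝ) (lam : Fin r → ℝ) : Prop :=
  (∀ i, IsCircuitI B (g i)) ∧ (∀ i, 0 < lam i) ∧ (∑ i, lam i • g i = u) ∧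
  ∀ i j, SignCompat B (g i) (g j)

/-- A face of the polyhedron `{x : B x ≤ d}`: the subset where some set of the inequalities
is required to be tight. -/
def IsFaceOf {mB n : Type*} [Fintype n] (B : Matrix mB n ℝ) (d : mB → ℝ)
    (F : Set (n → ℝ)) : Prop :=
  ∃ I : Set mB, F = {x | B.mulVec x ≤ d ∧ ∀ i ∈ I, B.mulVec x i = d i}

/-- `F` is the minimal face of `{x : B x ≤ d}` containing `v` and `w`. -/
def IsMinFaceOf {mB n : Type*} [Fintype n] (B : Matrix mB n ℝ) (d : mB → ℝ)
    (v w : n → ℝ) (F : Set (n → ℝ)) : Prop :=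
  IsFaceOf B d F ∧ v ∈ F ∧ w ∈ F ∧
  ∀ F' : Set (n → ℝ), IsFaceOf B d F' → v ∈ F' → w ∈ F' → F ⊆ F'

/-- `F` is a parallelotope of dimension `k`: a translate of the Minkowski sum of `k` line
segments with linearly independent directions. -/
def IsParallelotopeOfDim {n : Type*} [Fintype n] (F : Set (n → ℝ)) (k : ℕ) : Prop :=
  ∃ (t : n → ℝ) (u : Fin k → n → ℝ), LinearIndependent ℝ u ∧
    F = {x | ∃ c : Fin k → ℝ, (∀ i, c i ∈ Set.Icc (0 : ℝ) 1) ∧ x = t + ∑ i, c i • u i}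

/-- `{x : B x ≤ d}` is an `(n, dd)`-parallelotope: for every pair of vertices the minimal
face containing them is a parallelotope of dimension at most `dd`, and dimension `dd` is
attained for some pair of vertices. -/
def IsNDParallelotope {mB n : Type*} [Fintype n] (B : Matrix mB n ℝ) (d : mB → ℝ)
    (dd : ℕ) : Prop :=
  (∀ v ∈ Set.extremePoints ℝ (PolyIneq B d), ∀ w ∈ Set.extremePoints ℝ (PolyIneq B d),
    ∀ F : Set (n → ℝ), IsMinFaceOf B d v w F → ∃ k ≤ dd, IsParallelotopeOfDim F k) ∧
  (∃ v ∈ Set.extremePoints ℝ (PolyIneq B d), ∃ w ∈ Set.extremePoints ℝ (PolyIneq B d),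
    ∃ F : Set (n → ℝ), IsMinFaceOf B d v w F ∧ IsParallelotopeOfDim F dd)

/-- The admissible step lengths from `v` along `g` inside `P`; `maxstep(v, g; P)` is
`v + λ • g` for the greatest element `λ` of this set. -/
def stepSet {E : Type*} [AddCommGroup E] [Module ℝ E] (P : Set E) (v g : E) : Set ℝ :=
  {μ | 0 ≤ μ ∧ v + μ • g ∈ P}

section StepSet

variable {E : Type*} [NormedAddCommGroup E] [NormedSpace ℝ E]

theorem isCompact_stepSet {P : Set E} (hP : IsCompact P) (v : E) {g : E} (hg : g ≠ 0) :
    IsCompact (stepSet P v g) := by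
  have hline : Topology.IsClosedEmbedding fun μ : ℝ => v + μ • g :=
    (Homeomorph.addLeft v).isClosedEmbedding.comp (isClosedEmbedding_smul_left hg)
  exact (hline.isCompact_preimage hP).inter_left isClosed_Ici

theorem exists_isGreatest_stepSet {P : Set E} (hP : IsCompact P) {v : E} (hv : v ∈ P)
    {g : E} (hg : g ≠ 0) : ∃ lam, IsGreatest (stepSet P v g) lam :=
  (isCompact_stepSet hP v hg).exists_isGreatest ⟨0, le_rfl, by simpa using hv⟩

theorem eq_of_isGreatest_stepSet_of_subset {Q P : Set E} (hQP : Q ⊆ P) {v g : E}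
    {lamQ lamP : ℝ} (hQ : IsGreatest (stepSet Q v g) lamQ)
    (hP : IsGreatest (stepSet P v g) lamP) (hmem : v + lamP • g ∈ Q) : lamP = lamQ :=
  le_antisymm (hQ.2 ⟨hP.1.1, hmem⟩) (hP.2 ⟨hQ.1.1, hQP hQ.1.2⟩)

end StepSet

theorem isClosed_polyIneq {mB n : Type*} [Fintype n] (B : Matrix mB n ℝ) (d : mB → ℝ) :
    IsClosed (PolyIneq B d) :=
  isClosed_le (Continuous.matrix_mulVec continuous_const continuous_id) continuous_const

theorem IsCircuitI.of_fromRows {mB mC n : Type*} [Fintype n] {B : Matrix mB n ℝ}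
    {C : Matrix mC n ℝ} {g : n → ℝ} (hg : IsCircuitI (fromRows B C) g)
    (hC : ∀ j, (C *ᵥ g) j ≠ 0) : IsCircuitI B g := by
  obtain ⟨hg0, hgz, hmin⟩ := hg
  refine ⟨hg0, hgz, fun x hx hssub => hmin x hx ?_⟩
  obtain ⟨hsub, j, hjg, hjx⟩ := Set.ssubset_iff_exists.mp hssub
  simp only [fromRows_mulVec]
  refine Set.ssubset_iff_exists.mpr ⟨?_, Sum.inl j, hjg, hjx⟩
  rintro (i | i) hi
  · exact hsub hi
  · exact hC i

theorem circuit_step_into_facet_of_truncation_general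
    {mB n : Type*} [Fintype n]
    (B : Matrix mB n ℝ) (d : mB → ℝ) (c : n → ℝ) (ω₀ ε : ℝ)
    (hbdd : Bornology.IsBounded (PolyIneq B d))
    (hω : IsLeast ((fun x => c ⬝ᵥ x) '' PolyIneq B d) ω₀)
    (Pε : Set (n → ℝ)) (hPε : Pε = {x ∈ PolyIneq B d | ω₀ + ε ≤ c ⬝ᵥ x})
    (F : Set (n → ℝ)) (hF : F = {x ∈ Pε | c ⬝ᵥ x = ω₀ + ε})
    (h1 : ∀ w ∈ Set.extremePoints ℝ (PolyIneq B d), ω₀ < c ⬝ᵥ w → ω₀ + ε < c ⬝ᵥ w)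
    (h2 : ∀ u ∈ Set.extremePoints ℝ (PolyIneq B d), ∀ g : n → ℝ, IsCircuitI B g →
      (∃ δ : ℝ, 0 < δ ∧ u + δ • g ∈ PolyIneq B d) →
      ∀ lam : ℝ, IsGreatest {μ : ℝ | 0 ≤ μ ∧ u + μ • g ∈ PolyIneq B d} lam →
        u + lam • g ∈ Set.extremePoints ℝ (PolyIneq B d))
    (h3 : ∀ x ∈ F, x ∉ Set.extremePoints ℝ (PolyIneq B d))
    (v : n → ℝ) (hv : v ∈ Set.extremePoints ℝ (PolyIneq B d)) (hvc : ω₀ + ε < c ⬝ᵥ v)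
    (g : n → ℝ)
    (hg : IsCircuitI (Matrix.fromRows B (Matrix.of fun (_ : Unit) => -c)) g)
    (lam : ℝ) (hlam : IsGreatest {μ : ℝ | 0 ≤ μ ∧ v + μ • g ∈ Pε} lam)
    (hstep : v + lam • g ∈ F) :
    IsCircuitI B g ∧
    ∃ lam' : ℝ, IsGreatest {μ : ℝ | 0 ≤ μ ∧ v + μ • g ∈ PolyIneq B d} lam' ∧
      v + lam' • g ∈ PolyIneq B d ∧ c ⬝ᵥ (v + lam' • g) = ω₀ := by
  have hPεP : Pε ⊆ PolyIneq B d := hPε ▸ fun x hx => hx.1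
  obtain ⟨hlam0, hstepPε⟩ := hlam.1
  have hdescent : lam * (c ⬝ᵥ g) < 0 := by
    have hlevel := (hF ▸ hstep).2
    rw [dotProduct_add, dotProduct_smul, smul_eq_mul] at hlevel
    linarith
  have hcg : c ⬝ᵥ g < 0 := neg_of_mul_neg_right hdescent hlam0
  have hlampos : 0 < lam := pos_of_mul_neg_left hdescent hcg.le
  have hcirc : IsCircuitI B g :=
    hg.of_fromRows fun _ => by simpa [mulVec, dotProduct] using hcg.ne
  obtain ⟨lam', hlam'⟩ := exists_isGreatest_stepSet
    (Metric.isCompact_of_isClosed_isBounded (isClosed_polyIneq B d) hbdd) hv.1 hcirc.1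
  have hw := h2 v hv g hcirc ⟨lam, hlampos, hPεP hstepPε⟩ lam' hlam'
  refine ⟨hcirc, lam', hlam', hlam'.1.2, ?_⟩
  by_contra hne
  -- otherwise assumption (i) puts the vertex `v + lam' • g` inside `Pε`, where it is the step
  -- already taken, i.e. a vertex of `P` in `F`
  have hwc : ω₀ + ε < c ⬝ᵥ (v + lam' • g) :=
    h1 _ hw ((hω.2 ⟨_, hlam'.1.2, rfl⟩).lt_of_ne' hne)
  have hlam_eq : lam' = lam :=
    eq_of_isGreatest_stepSet_of_subset hPεP hlam hlam' (hPε ▸ ⟨hlam'.1.2, hwc.le⟩)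
  exact h3 _ hstep (hlam_eq ▸ hw)

/-- Let `P = {x : B x ≤ d}` be a polytope, `ω₀ = min {cᵀx : x ∈ P}`, and
`ε > 0` with: (i) every vertex `w` of `P` with `cᵀw > ω₀` satisfies `cᵀw > ω₀ + ε`;
(ii) `P` has the vertex-walk property; (iii) the facet `F = {x ∈ P_ε : cᵀx = ω₀ + ε}` of
`P_ε = P ∩ {x : cᵀx ≥ ω₀ + ε}` contains no vertex of `P`.  If `v` is a vertex of `P` with
`cᵀv > ω₀ + ε` and `g` is a circuit of `P_ε` (w.r.t. the description of `P` with the added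
row `−cᵀx ≤ −(ω₀ + ε)`) whose maximal step from `v` in `P_ε` lands in `F`, then `g` is a
circuit of `P` and the maximal step from `v` in `P` lands in the optimal face
`{x ∈ P : cᵀx = ω₀}`. -/
theorem circuit_step_into_facet_of_truncation
    {mB n : Type*} [Fintype mB] [Fintype n]
    (B : Matrix mB n ℝ) (d : mB → ℝ) (c : n → ℝ) (ω₀ ε : ℝ) (hε : 0 < ε)
    (hbdd : Bornology.IsBounded (PolyIneq B d)) (hne : (PolyIneq B d).Nonempty)
    (hω : IsLeast ((fun x => c ⬝ᵥ x) '' PolyIneq B d) ω₀)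
    (Pε : Set (n → ℝ)) (hPε : Pε = {x ∈ PolyIneq B d | ω₀ + ε ≤ c ⬝ᵥ x})
    (F : Set (n → ℝ)) (hF : F = {x ∈ Pε | c ⬝ᵥ x = ω₀ + ε})
    (h1 : ∀ w ∈ Set.extremePoints ℝ (PolyIneq B d), ω₀ < c ⬝ᵥ w → ω₀ + ε < c ⬝ᵥ w)
    (h2 : ∀ u ∈ Set.extremePoints ℝ (PolyIneq B d), ∀ g : n → ℝ, IsCircuitI B g →
      (∃ δ : ℝ, 0 < δ ∧ u + δ • g ∈ PolyIneq B d) →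
      ∀ lam : ℝ, IsGreatest {μ : ℝ | 0 ≤ μ ∧ u + μ • g ∈ PolyIneq B d} lam →
        u + lam • g ∈ Set.extremePoints ℝ (PolyIneq B d))
    (h3 : ∀ x ∈ F, x ∉ Set.extremePoints ℝ (PolyIneq B d))
    (v : n → ℝ) (hv : v ∈ Set.extremePoints ℝ (PolyIneq B d)) (hvc : ω₀ + ε < c ⬝ᵥ v)
    (g : n → ℝ)
    (hg : IsCircuitI (Matrix.fromRows B (Matrix.of fun (_ : Unit) => -c)) g)
    (lam : ℝ) (hlam : IsGreatest {μ : ℝ | 0 ≤ μ ∧ v + μ • g ∈ Pε} lam)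
    (hstep : v + lam • g ∈ F) :
    IsCircuitI B g ∧
    ∃ lam' : ℝ, IsGreatest {μ : ℝ | 0 ≤ μ ∧ v + μ • g ∈ PolyIneq B d} lam' ∧
      v + lam' • g ∈ PolyIneq B d ∧ c ⬝ᵥ (v + lam' • g) = ω₀ :=
  circuit_step_into_facet_of_truncation_general B d c ω₀ ε hbdd hω Pε hPε F hF h1 h2 h3 v hv hvc g
    hg lam hlam hstep
end

section
/- Let P = {x ∈ ℝ^n : Ax = b, Bx ≤ d} be a rational polyhedron and let x, y ∈ P. (a) Every sign-compatible circuit decomposition ((g_1,λ_1),…,(g_r,λ_r)) of y − x satisfies Σ_{i=1}^r ‖λ_i B g_i‖_1 = ‖B(y − x)‖_1. (b) Every finite list ((g_1,λ_1),…,(g_r,λ_r)) with each g_i a circuit of P, each λ_i > 0, and Σ_{i=1}^r λ_i g_i = y − x satisfies Σ_{i=1}^r ‖λ_i B g_i‖_1 ≥ ‖B(y − x)‖_1. Hence any sign-compatible circuit decomposition (in particular, any sign-compatible circuit walk) minimizes Σ_{i=1}^r ‖λ_i B g_i‖_1. -/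
/-!
`B (y - x) = ∑ᵢ λᵢ B gᵢ`, so coordinatewise the triangle inequality gives (b). Sign-compatibility
means that in every coordinate all summands `λᵢ (B gᵢ)ⱼ` have the same sign, and then the triangle
inequality is an equality, which gives (a).
-/

open Matrix

open Finset

theorem Finset.abs_sum_eq_sum_abs_of_forall_mul_nonneg {ι R : Type*} [CommRing R] [LinearOrder R]
    [IsStrictOrderedRing R] {s : Finset ι} {f : ι → R}
    (h : ∀ i ∈ s, ∀ k ∈ s, 0 ≤ f i * f k) : |∑ i ∈ s, f i| = ∑ i ∈ s, |f i| := by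
  by_cases hpos : ∃ k ∈ s, 0 < f k
  · obtain ⟨k, hk, hfk⟩ := hpos
    have hnonneg : ∀ i ∈ s, 0 ≤ f i := fun i hi => nonneg_of_mul_nonneg_left (h i hi k hk) hfk
    rw [abs_sum_of_nonneg hnonneg]
    exact sum_congr rfl fun i hi => (abs_of_nonneg (hnonneg i hi)).symm
  · push Not at hpos
    rw [abs_of_nonpos (sum_nonpos hpos), ← sum_neg_distrib]
    exact sum_congr rfl fun i hi => (abs_of_nonpos (hpos i hi)).symm

theorem SignCompat.smul {mB n : Type*} [Fintype n] {B : Matrix mB n ℝ} {u v : n → ℝ}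
    (h : SignCompat B u v) {a c : ℝ} (ha : 0 ≤ a) (hc : 0 ≤ c) :
    SignCompat B (a • u) (c • v) := fun j => by
  simp only [mulVec_smul, Pi.smul_apply, smul_eq_mul]
  calc (0 : ℝ) ≤ a * c * ((B *ᵥ u) j * (B *ᵥ v) j) := mul_nonneg (mul_nonneg ha hc) (h j)
    _ = a * (B *ᵥ u) j * (c * (B *ᵥ v) j) := by ring

section OneNorm

variable {ι mB n : Type*} [Fintype mB] [Fintype n] (s : Finset ι) (B : Matrix mB n ℝ)
  {v : ι → n → ℝ}

theorem sum_abs_mulVec_sum_le :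
    ∑ j, |(B *ᵥ ∑ i ∈ s, v i) j| ≤ ∑ i ∈ s, ∑ j, |(B *ᵥ v i) j| := by
  rw [mulVec_sum, sum_comm]
  gcongr with j
  rw [Finset.sum_apply]
  exact abs_sum_le_sum_abs _ _

theorem sum_abs_mulVec_sum_of_signCompat
    (h : ∀ i ∈ s, ∀ k ∈ s, SignCompat B (v i) (v k)) :
    ∑ j, |(B *ᵥ ∑ i ∈ s, v i) j| = ∑ i ∈ s, ∑ j, |(B *ᵥ v i) j| := by
  rw [mulVec_sum, sum_comm]
  refine sum_congr rfl fun j _ => ?_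
  rw [Finset.sum_apply]
  exact abs_sum_eq_sum_abs_of_forall_mul_nonneg fun i hi k hk => h i hi k hk j

end OneNorm

theorem sc_decomp_minimizes_one_norm_general
    {mA mB n : Type*} [Fintype mB] [Fintype n]
    (A : Matrix mA n ℝ) (B : Matrix mB n ℝ)
    (x y : n → ℝ) :
    (∀ (r : ℕ) (g : Fin r → n → ℝ) (lam : Fin r → ℝ),
      IsSCDecomp A B (y - x) r g lam →
      ∑ i, (∑ j, |B.mulVec (lam i • g i) j|) = ∑ j, |B.mulVec (y - x) j|) ∧
    (∀ (r : ℕ) (g : Fin r → n → ℝ) (lam : Fin r → ℝ),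
      (∀ i, IsCircuit A B (g i)) → (∀ i, 0 < lam i) → (∑ i, lam i • g i = y - x) →
      ∑ j, |B.mulVec (y - x) j| ≤ ∑ i, (∑ j, |B.mulVec (lam i • g i) j|)) := by
  refine ⟨fun r g lam ⟨_, hlam, hsum, hsc⟩ => ?_, fun r g lam _ _ hsum => ?_⟩
  · rw [← hsum]
    exact (sum_abs_mulVec_sum_of_signCompat _ B fun i _ k _ =>
      (hsc i k).smul (hlam i).le (hlam k).le).symm
  · rw [← hsum]
    exact sum_abs_mulVec_sum_le _ B

/-- Let `P = {x : A x = b, B x ≤ d}` be a polyhedron and `x, y ∈ P`.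
(a) Every sign-compatible circuit decomposition of `y − x` satisfies
`∑ᵢ ‖λᵢ B gᵢ‖₁ = ‖B (y − x)‖₁`.
(b) Every list of circuits `gᵢ` with positive multipliers `λᵢ` summing to `y − x` satisfies
`∑ᵢ ‖λᵢ B gᵢ‖₁ ≥ ‖B (y − x)‖₁`.
Hence any sign-compatible circuit decomposition minimizes `∑ᵢ ‖λᵢ B gᵢ‖₁`. -/
theorem sc_decomp_minimizes_one_norm
    {mA mB n : Type*} [Fintype mA] [Fintype mB] [Fintype n]
    (A : Matrix mA n ℝ) (b : mA → ℝ) (B : Matrix mB n ℝ) (d : mB → ℝ)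
    (x y : n → ℝ) (hx : InPoly A b B d x) (hy : InPoly A b B d y) :
    (∀ (r : ℕ) (g : Fin r → n → ℝ) (lam : Fin r → ℝ),
      IsSCDecomp A B (y - x) r g lam →
      ∑ i, (∑ j, |B.mulVec (lam i • g i) j|) = ∑ j, |B.mulVec (y - x) j|) ∧
    (∀ (r : ℕ) (g : Fin r → n → ℝ) (lam : Fin r → ℝ),
      (∀ i, IsCircuit A B (g i)) → (∀ i, 0 < lam i) → (∑ i, lam i • g i = y - x) →
      ∑ j, |B.mulVec (y - x) j| ≤ ∑ i, (∑ j, |B.mulVec (lam i • g i) j|)) :=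
  sc_decomp_minimizes_one_norm_general A B x y
end
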